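/- For every t > 0, every p > 0 and every unit vector ξ ∈ 𝕊^{n−1} ∩ S^⊥, the integral ∫₀¹ |√Q e^{αtBᵀ} ξ|^p dα is strictly positive. -/

import Mathlib

open Matrix MeasureTheory

/-- The canonical Euclidean norm on `ℝⁿ`. -/
noncomputable def enorm {n : ℕ} (v : Fin n → ℝ) : ℝ := Real.sqrt (∑ i, v i ^ 2)

/-- The canonical Euclidean scalar product on `ℝⁿ`. -/
def euclInner {n : ℕ} (u v : Fin n → ℝ) : ℝ := ∑ i, u i * v i

/-- Membership in `S = ⋂_{j=0}^{n-1} Ker(√Q (Bᵀ)^j)`, where `sq` stands for `√Q`. -/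
def memS (n : ℕ) (B sq : Matrix (Fin n) (Fin n) ℝ) (η : Fin n → ℝ) : Prop :=
  ∀ j < n, (sq * Bᵀ ^ j).mulVec η = 0

/-- Membership in `S^⊥`, the Euclidean orthogonal complement of `S`. -/
def memSperp (n : ℕ) (B sq : Matrix (Fin n) (Fin n) ℝ) (ξ₀ : Fin n → ℝ) : Prop :=
  ∀ η : Fin n → ℝ, memS n B sq η → euclInner ξ₀ η = 0

/-- Membership in `V_k^⊥`, where `V_k = ⋂_{j=0}^{k} Ker(√Q (Bᵀ)^j)`. -/
def memVperp (n : ℕ) (B sq : Matrix (Fin n) (Fin n) ℝ) (k : ℕ) (ξ₀ : Fin n → ℝ) : Prop :=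
  ∀ η : Fin n → ℝ, (∀ j ≤ k, (sq * Bᵀ ^ j).mulVec η = 0) → euclInner ξ₀ η = 0

/-- The index `k_{ξ₀} = min {0 ≤ k ≤ r : ξ₀ ∈ V_k^⊥}` of a vector `ξ₀ ∈ S^⊥`. -/
noncomputable def kIndex (n : ℕ) (B sq : Matrix (Fin n) (Fin n) ℝ) (r : ℕ)
    (ξ₀ : Fin n → ℝ) : ℕ :=
  sInf {k | k ≤ r ∧ memVperp n B sq k ξ₀}

/-- `r` is the smallest integer such that `S = ⋂_{j=0}^{r} Ker(√Q (Bᵀ)^j)`. -/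
def IsSmallestr (n : ℕ) (B sq : Matrix (Fin n) (Fin n) ℝ) (r : ℕ) : Prop :=
  IsLeast {k | ∀ η : Fin n → ℝ,
    (∀ j ≤ k, (sq * Bᵀ ^ j).mulVec η = 0) ↔ memS n B sq η} r

/-- The positive semidefinite square root (as in the older Mathlib). -/
noncomputable def Matrix.PosSemidef.sqrt {n : Type*} [Fintype n] [DecidableEq n] {A : Matrix n n ℝ}
    (hA : A.PosSemidef) : Matrix n n ℝ :=
  hA.1.eigenvectorUnitary.1 * diagonal ((↑) ∘ (√·) ∘ hA.1.eigenvalues) *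
    (star hA.1.eigenvectorUnitary : Matrix n n ℝ)

/-- The symbol `a_t(ξ) = (1/2) ∫₀¹ |√Q e^{α t Bᵀ} ξ|^{2s} dα`. -/
noncomputable def symb (n : ℕ) (B sq : Matrix (Fin n) (Fin n) ℝ) (s t : ℝ)
    (ξ : Fin n → ℝ) : ℝ :=
  (1 / 2) * ∫ α in (0:ℝ)..1, _root_.enorm ((sq * NormedSpace.exp ((α * t) • Bᵀ)).mulVec ξ) ^ (2 * s)

open NormedSpace Set

/-!
If `ξ ∈ S^⊥` is a unit vector, the continuous function `α ↦ √Q e^{αtBᵀ} ξ` cannot vanish on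
all of `(0, 1)`: differentiating `j` times and letting `α → 0` would give `√Q (tBᵀ)^j ξ = 0` for
every `j`, i.e. `ξ ∈ S`, so `|ξ|² = ⟨ξ, ξ⟩ = 0`. Hence the continuous nonnegative integrand is
positive somewhere in `(0, 1)`, and so is its integral.
-/

theorem intervalIntegral_pos_of_continuous_of_nonneg {f : ℝ → ℝ} {a b x : ℝ}
    (hf : Continuous f) (hf_nonneg : 0 ≤ f) (hx : x ∈ Ioo a b) (hfx : f x ≠ 0) :
    0 < ∫ t in a..b, f t := by
  rw [intervalIntegral.integral_pos_iff_support_of_nonneg_ae (ae_of_all _ hf_nonneg)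
    (hf.intervalIntegrable a b)]
  refine ⟨hx.1.trans hx.2, ?_⟩
  calc 0 < volume (Function.support f ∩ Ioo a b) :=
        (hf.isOpen_support.inter isOpen_Ioo).measure_pos volume ⟨x, hfx, hx⟩
    _ ≤ volume (Function.support f ∩ Ioc a b) :=
        measure_mono (inter_subset_inter_right _ Ioo_subset_Ioc_self)

section ExpVanishing

variable {𝔸 E : Type*} [NormedRing 𝔸] [NormedAlgebra ℝ 𝔸] [CompleteSpace 𝔸]
  [NormedAddCommGroup E] [NormedSpace ℝ E] (L : 𝔸 →L[ℝ] E) {a : 𝔸}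

theorem hasDerivAt_map_mul_exp_smul (m : 𝔸) (α : ℝ) :
    HasDerivAt (fun β : ℝ => L (m * exp (β • a))) (L (m * a * exp (α • a))) α := by
  have := L.hasFDerivAt.comp_hasDerivAt α ((hasDerivAt_exp_smul_const' a α).const_mul m)
  simpa only [Function.comp_def, mul_assoc] using this

theorem map_mul_mul_exp_smul_eq_zero {m : 𝔸} {U : Set ℝ} (hU : IsOpen U)
    (h : ∀ α ∈ U, L (m * exp (α • a)) = 0) : ∀ α ∈ U, L (m * a * exp (α • a)) = 0 := by
  intro α hα
  have hzero : (fun β : ℝ => L (m * exp (β • a))) =ᶠ[nhds α] fun _ => 0 :=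
    Filter.eventuallyEq_of_mem (hU.mem_nhds hα) h
  rw [← (hasDerivAt_map_mul_exp_smul L m α).deriv, hzero.deriv_eq, deriv_const]

theorem map_mul_pow_eq_zero_of_map_mul_exp_smul_eq_zero {m : 𝔸}
    (h : ∀ α ∈ Ioo (0 : ℝ) 1, L (m * exp (α • a)) = 0) (j : ℕ) : L (m * a ^ j) = 0 := by
  have hj : ∀ α ∈ Ioo (0 : ℝ) 1, L (m * a ^ j * exp (α • a)) = 0 := by
    induction j with
    | zero => simpa using h
    | succ j ih =>
      simpa only [pow_succ, mul_assoc] using map_mul_mul_exp_smul_eq_zero L isOpen_Ioo ih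
  have hcont : Continuous fun α : ℝ => L (m * a ^ j * exp (α • a)) :=
    continuous_iff_continuousAt.2 fun α => (hasDerivAt_map_mul_exp_smul L _ α).continuousAt
  have h0 : (0 : ℝ) ∈ closure (Ioo (0 : ℝ) 1) := by simp [closure_Ioo]
  simpa [closure_singleton] using map_mem_closure hcont h0 (t := {0}) hj

end ExpVanishing

section MatrixExp

attribute [local instance] Matrix.linftyOpNormedAddCommGroup Matrix.linftyOpNormedRing
  Matrix.linftyOpNormedAlgebra

variable {m : Type*} [Fintype m] [DecidableEq m]

theorem mul_pow_mulVec_eq_zero_of_mul_exp_smul_mulVec_eq_zero {M : Matrix m m ℝ}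
    {A : Matrix m m ℝ} {v : m → ℝ} (h : ∀ α ∈ Ioo (0 : ℝ) 1, (M * exp (α • A)) *ᵥ v = 0)
    (j : ℕ) : (M * A ^ j) *ᵥ v = 0 := by
  let L : Matrix m m ℝ →L[ℝ] m → ℝ :=
    (LinearMap.applyₗ v ∘ₗ Matrix.toLin'.toLinearMap).toContinuousLinearMap
  exact map_mul_pow_eq_zero_of_map_mul_exp_smul_eq_zero L (m := M) (a := A) h j

theorem continuous_mul_exp_smul_mulVec (M A : Matrix m m ℝ) (v : m → ℝ) :
    Continuous fun α : ℝ => (M * exp (α • A)) *ᵥ v :=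
  (continuous_const.matrix_mul (exp_continuous.comp (continuous_id.smul continuous_const))
    ).matrix_mulVec continuous_const

end MatrixExp

theorem enorm_eq_norm_toLp {n : ℕ} (v : Fin n → ℝ) :
    _root_.enorm v = ‖(WithLp.toLp 2 v : EuclideanSpace ℝ (Fin n))‖ := by
  simp [_root_.enorm, EuclideanSpace.norm_eq]

theorem euclInner_self_eq_enorm_sq {n : ℕ} (v : Fin n → ℝ) :
    euclInner v v = _root_.enorm v ^ 2 := by
  rw [_root_.enorm, Real.sq_sqrt (Finset.sum_nonneg fun i _ => sq_nonneg (v i))]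
  simp only [euclInner, sq]

theorem memS_of_mul_exp_smul_mulVec_eq_zero {n : ℕ} {B sq : Matrix (Fin n) (Fin n) ℝ} {t : ℝ}
    (ht : t ≠ 0) {ξ : Fin n → ℝ}
    (h : ∀ α ∈ Ioo (0 : ℝ) 1, (sq * exp ((α * t) • Bᵀ)) *ᵥ ξ = 0) : memS n B sq ξ := by
  intro j _
  have h' : ∀ α ∈ Ioo (0 : ℝ) 1, (sq * exp (α • t • Bᵀ)) *ᵥ ξ = 0 := by
    simpa only [smul_smul] using h
  have hj := mul_pow_mulVec_eq_zero_of_mul_exp_smul_mulVec_eq_zero h' j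
  rw [smul_pow, mul_smul_comm, smul_mulVec] at hj
  exact (smul_eq_zero.1 hj).resolve_left (pow_ne_zero j ht)

theorem statement17_general (n : ℕ)
    (B Q : Matrix (Fin n) (Fin n) ℝ) (hQ : Q.PosSemidef) :
    ∀ t : ℝ, 0 < t → ∀ p : ℝ, 0 < p →
      ∀ ξ : Fin n → ℝ, _root_.enorm ξ = 1 → memSperp n B hQ.sqrt ξ →
        0 < ∫ α in (0:ℝ)..1,
          _root_.enorm ((hQ.sqrt * NormedSpace.exp ((α * t) • Bᵀ)).mulVec ξ) ^ p := by
  intro t ht p hp ξ hξ hperp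
  obtain ⟨α, hα, hne⟩ : ∃ α ∈ Ioo (0 : ℝ) 1, (hQ.sqrt * exp ((α * t) • Bᵀ)) *ᵥ ξ ≠ 0 := by
    by_contra! h
    have hξξ := hperp ξ (memS_of_mul_exp_smul_mulVec_eq_zero ht.ne' h)
    rw [euclInner_self_eq_enorm_sq, hξ] at hξξ
    norm_num at hξξ
  simp only [enorm_eq_norm_toLp]
  refine intervalIntegral_pos_of_continuous_of_nonneg ?_ (fun _ => by positivity) hα ?_
  · have hcont := continuous_mul_exp_smul_mulVec hQ.sqrt (t • Bᵀ) ξ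
    simp only [smul_smul] at hcont
    exact ((PiLp.continuous_toLp 2 _).comp hcont).norm.rpow_const fun _ => Or.inr hp.le
  · exact (Real.rpow_pos_of_pos (norm_pos_iff.2 (by simpa using hne)) p).ne'

/-- For every `t > 0`, `p > 0` and unit vector `ξ ∈ 𝕊^{n−1} ∩ S^⊥`,
`∫₀¹ |√Q e^{αtBᵀ} ξ|^p dα > 0`. -/
theorem statement17 (n : ℕ) (hn : 1 ≤ n)
    (B Q : Matrix (Fin n) (Fin n) ℝ) (hQ : Q.PosSemidef) :
    ∀ t : ℝ, 0 < t → ∀ p : ℝ, 0 < p →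
      ∀ ξ : Fin n → ℝ, _root_.enorm ξ = 1 → memSperp n B hQ.sqrt ξ →
        0 < ∫ α in (0:ℝ)..1,
          _root_.enorm ((hQ.sqrt * NormedSpace.exp ((α * t) • Bᵀ)).mulVec ξ) ^ p :=
  statement17_general n B Q hQ
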